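/- Let 𝔫 be the 5-dimensional real Lie algebra with orthonormal basis {E₁,…,E₅} and the single non-zero bracket [E₁,E₂] = m·E₃ with m > 0 (the two-step nilpotent Lie algebra with three-dimensional center). Then the diagonal endomorphism D defined by D(E₁) = m²·E₁, D(E₂) = m²·E₂, D(E₃) = 2m²·E₃, D(E₄) = (3/2)m²·E₄, D(E₅) = (3/2)m²·E₅ is a derivation of 𝔫, and Ric = −(3/2)m²·Id + D; in particular 𝔫 is an algebraic Ricci soliton for every m > 0. -/

import Mathlib

/-!
Both operators are diagonal in the basis `E`. Since the only structure constant is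
`⟨[E₁,E₂],E₃⟩ = m`, the Ricci formula gives `Ric = diag(-m²/2, -m²/2, m²/2, 0, 0)`, which is
`-(3/2)m² + diag(m², m², 2m², 3m²/2, 3m²/2)`; and a diagonal map `diag(c)` is a derivation of
this bracket as soon as `c₃ = c₁ + c₂`.
-/


open scoped BigOperators

namespace Nilsoliton4

noncomputable section

abbrev V : Type := Fin 5 → ℝ

/-- The orthonormal basis vectors E₁,…,E₅ (indexed 0,…,4). -/
def E (i : Fin 5) : V := Pi.single i 1

/-- The inner product making `E` an orthonormal basis. -/
def ip (x y : V) : ℝ := ∑ i, x i * y i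

/-- `D` is a derivation of the bracket `br`. -/
def IsDerivation (br : V → V → V) (D : V →ₗ[ℝ] V) : Prop :=
  ∀ X Y : V, D (br X Y) = br (D X) Y + br X (D Y)

/-- `Ric` is the Ricci operator of the nilpotent Lie group with left-invariant
metric determined by the bracket `br` and the orthonormal basis `E`. -/
def IsRicci (br : V → V → V) (Ric : V →ₗ[ℝ] V) : Prop :=
  ∀ X Y : V, ip (Ric X) Y =
      -(1/2) * (∑ i : Fin 5, ip (br X (E i)) (br Y (E i)))
      + (1/4) * (∑ i : Fin 5, ∑ j : Fin 5, ip (br (E i) (E j)) X * ip (br (E i) (E j)) Y)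

/-- The bracket: [E₁,E₂] = m·E₃. -/
def br (m : ℝ) (X Y : V) : V :=
  (m * (X 0 * Y 1 - X 1 * Y 0)) • E 2

lemma E_apply (i j : Fin 5) : E i j = if j = i then 1 else 0 :=
  Pi.single_apply i 1 j

lemma ip_E (z : V) (k : Fin 5) : ip z (E k) = z k := by
  simp [ip, E, Pi.single_apply]

lemma ip_smul_E (a : ℝ) (k : Fin 5) (Z : V) : ip (a • E k) Z = a * Z k := by
  simp [ip, E, Pi.single_apply]

lemma apply_eq_mul_of_apply_E {D : V →ₗ[ℝ] V} {c : Fin 5 → ℝ}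
    (h : ∀ i, D (E i) = c i • E i) (X : V) (k : Fin 5) : D X k = c k * X k := by
  have hdiag : D = Matrix.toLin' (Matrix.diagonal c) := by
    refine (Pi.basisFun ℝ (Fin 5)).ext fun i => ?_
    rw [Pi.basisFun_apply]
    change D (E i) = _
    rw [h, Matrix.toLin'_apply]
    ext j
    rw [Matrix.mulVec_diagonal]
    by_cases hj : j = i <;> simp [E_apply, hj]
  rw [hdiag, Matrix.toLin'_apply, Matrix.mulVec_diagonal]

lemma isDerivation_br_of_apply_eq_mul {m : ℝ} {D : V →ₗ[ℝ] V} {c : Fin 5 → ℝ}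
    (hD : ∀ X k, D X k = c k * X k) (hc : c 2 = c 0 + c 1) :
    IsDerivation (br m) D := by
  intro X Y
  ext k
  simp only [br, Pi.add_apply, Pi.smul_apply, smul_eq_mul, hD, E_apply]
  split_ifs with hk
  · subst hk; rw [hc]; ring
  · ring

lemma ip_br (m : ℝ) (X Y Z : V) : ip (br m X Y) Z = m * (X 0 * Y 1 - X 1 * Y 0) * Z 2 :=
  ip_smul_E _ _ _

lemma sum_ip_br_br (m : ℝ) (X Y : V) :
    ∑ i, ip (br m X (E i)) (br m Y (E i)) = m ^ 2 * (X 0 * Y 0 + X 1 * Y 1) := by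
  simp only [ip_br]
  simp [br, Fin.sum_univ_five, E_apply]
  ring

lemma sum_sum_ip_br_mul (m : ℝ) (X Y : V) :
    ∑ i, ∑ j, ip (br m (E i) (E j)) X * ip (br m (E i) (E j)) Y = 2 * m ^ 2 * (X 2 * Y 2) := by
  simp [ip_br, Fin.sum_univ_five, E_apply]
  ring

lemma IsRicci.br_apply {m : ℝ} {Ric : V →ₗ[ℝ] V} (h : IsRicci (br m) Ric) (X : V) (k : Fin 5) :
    Ric X k = ![-(m ^ 2 / 2), -(m ^ 2 / 2), m ^ 2 / 2, 0, 0] k * X k := by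
  rw [← ip_E (Ric X) k, h, sum_ip_br_br, sum_sum_ip_br_mul]
  fin_cases k <;> simp [E_apply] <;> ring

theorem stmt4_general (m : ℝ)
    (Ric : V →ₗ[ℝ] V) (hRic : IsRicci (br m) Ric)
    (D : V →ₗ[ℝ] V)
    (hD0 : D (E 0) = (m ^ 2) • E 0)
    (hD1 : D (E 1) = (m ^ 2) • E 1)
    (hD2 : D (E 2) = (2 * m ^ 2) • E 2)
    (hD3 : D (E 3) = ((3/2) * m ^ 2) • E 3)
    (hD4 : D (E 4) = ((3/2) * m ^ 2) • E 4) :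
    IsDerivation (br m) D ∧
    Ric = (-(3/2) * m ^ 2) • (LinearMap.id : V →ₗ[ℝ] V) + D := by
  have hD : ∀ X k, D X k = ![m ^ 2, m ^ 2, 2 * m ^ 2, (3/2) * m ^ 2, (3/2) * m ^ 2] k * X k :=
    apply_eq_mul_of_apply_E fun i => by fin_cases i <;> assumption
  refine ⟨isDerivation_br_of_apply_eq_mul hD (by simp; ring), ?_⟩
  refine LinearMap.ext fun X => funext fun k => ?_
  rw [LinearMap.add_apply, Pi.add_apply, hRic.br_apply, hD]
  fin_cases k <;> simp <;> ring

theorem stmt4 (m : ℝ) (hm : 0 < m)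
    (Ric : V →ₗ[ℝ] V) (hRic : IsRicci (br m) Ric)
    (D : V →ₗ[ℝ] V)
    (hD0 : D (E 0) = (m ^ 2) • E 0)
    (hD1 : D (E 1) = (m ^ 2) • E 1)
    (hD2 : D (E 2) = (2 * m ^ 2) • E 2)
    (hD3 : D (E 3) = ((3/2) * m ^ 2) • E 3)
    (hD4 : D (E 4) = ((3/2) * m ^ 2) • E 4) :
    IsDerivation (br m) D ∧
    Ric = (-(3/2) * m ^ 2) • (LinearMap.id : V →ₗ[ℝ] V) + D :=
  stmt4_general m Ric hRic D hD0 hD1 hD2 hD3 hD4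

end

end Nilsoliton4
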